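/- Let n ≥ 1 and let r be a partition of {1, …, 2n} such that 2j−1 and 2j lie in different blocks of r for every j ∈ {1, …, n}. Let η = {{1,2}, {3,4}, …, {2n−1, 2n}} be the partition of {1, …, 2n} into consecutive pairs. Then |r ∨ η| ≤ |r|/2, where ∨ denotes the join in the lattice of partitions of {1, …, 2n} (ordered by refinement) and |p| denotes the number of blocks of a partition p. -/

import Mathlib

/-- The partition `η = {{1,2}, {3,4}, …, {2n-1,2n}}` of `{1, …, 2n}` into consecutive pairs
(here `{0,1}, {2,3}, …` on `Fin (2 * n)`), as a setoid. -/
def pairPartition (n : ℕ) : Setoid (Fin (2 * n)) :=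
  Setoid.ker fun i => (i : ℕ) / 2

/-- If `r` is a partition of `{1, …, 2n}` such that `2j - 1` and `2j` lie in different blocks
of `r` for every `j ∈ {1, …, n}`, and `η = {{1,2}, {3,4}, …, {2n-1,2n}}`, then
`|r ∨ η| ≤ |r| / 2`, where `|p|` denotes the number of blocks of a partition `p`. -/
theorem blocks_join_pairPartition_le (n : ℕ) (hn : 1 ≤ n) (r : Setoid (Fin (2 * n)))
    (hr : ∀ j : Fin n,
      ¬ r.r ⟨2 * j.1, by have := j.isLt; omega⟩ ⟨2 * j.1 + 1, by have := j.isLt; omega⟩) :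
    (Nat.card (Quotient (r ⊔ pairPartition n)) : ℝ) ≤ (Nat.card (Quotient r) : ℝ) / 2 := by
  set s := r ⊔ pairPartition n with hs
  -- the natural projection from r-classes to s-classes
  have hle : ∀ a b : Fin (2 * n), r.r a b → s.r a b := fun a b h =>
    (le_sup_left : r ≤ s) h
  let f : Quotient r → Quotient s := Quotient.map' id hle
  -- for each s-class, produce two distinct r-classes mapping to it
  have key : ∀ b : Quotient s, ∃ c c' : Quotient r, c ≠ c' ∧ f c = b ∧ f c' = b := by
    intro b
    obtain ⟨x, hx⟩ := Quotient.exists_rep b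
    have hj : x.1 / 2 < n := Nat.div_lt_of_lt_mul (by omega)
    set j : ℕ := x.1 / 2 with hjdef
    have h2j : 2 * j < 2 * n := by omega
    have h2j1 : 2 * j + 1 < 2 * n := by omega
    set a : Fin (2 * n) := ⟨2 * j, h2j⟩ with ha
    set a' : Fin (2 * n) := ⟨2 * j + 1, h2j1⟩ with ha'
    have hpa : s.r a x := by
      apply (le_sup_right : pairPartition n ≤ s)
      show (a.1 : ℕ) / 2 = x.1 / 2
      simp [ha, Nat.mul_div_cancel_left]
      exact hjdef
    have hpa' : s.r a' x := by
      apply (le_sup_right : pairPartition n ≤ s)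
      show (2 * j + 1) / 2 = x.1 / 2
      omega
    refine ⟨Quotient.mk r a, Quotient.mk r a', ?_, ?_, ?_⟩
    · intro h
      exact hr ⟨j, hj⟩ (Quotient.eq''.mp h)
    · show Quotient.mk s a = b
      rw [← hx]
      exact Quotient.sound hpa
    · show Quotient.mk s a' = b
      rw [← hx]
      exact Quotient.sound hpa'
  -- build an injection (Quotient s) × Bool → Quotient r
  choose g g' hgg hg hg' using key
  have hinj : Function.Injective (fun p : Quotient s × Bool =>
      if p.2 then g p.1 else g' p.1) := by
    intro ⟨b, t⟩ ⟨b', t'⟩ h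
    simp only at h
    have hb : b = b' := by
      have h1 : f (if t then g b else g' b) = b := by
        cases t <;> simp [hg, hg']
      have h2 : f (if t' then g b' else g' b') = b' := by
        cases t' <;> simp [hg, hg']
      rw [← h1, ← h2, h]
    subst hb
    cases t <;> cases t'
    · rfl
    · simp only [if_true, if_false] at h
      exact absurd h.symm (hgg b)
    · simp only [if_true, if_false] at h
      exact absurd h (hgg b)
    · rfl
  have hcard : Nat.card (Quotient s × Bool) ≤ Nat.card (Quotient r) :=
    Nat.card_le_card_of_injective _ hinj
  have hb2 : Nat.card Bool = 2 := by simp [Nat.card_eq_fintype_card]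
  rw [Nat.card_prod, hb2] at hcard
  rw [le_div_iff₀ (by norm_num)]
  exact_mod_cast hcard
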